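/- Let F be a field and A = F[T]_{(T)}. In K^M_2(F(T)), for any a ∈ A, u ∈ A^×, and j ∈ ℤ, one has {1 + aT, uT^j} = {1 + aT, u} − j{1 + aT, −a}; in particular {1 + aT, uT^j} lies in (1 + TA)·K^M_1(A). -/

import Mathlib

open TensorProduct Polynomial

/-- The Steinberg relations inside `F^× ⊗_ℤ F^×`. -/
def steinbergRel (F : Type*) [Field F] :
    Submodule ℤ (TensorProduct ℤ (Additive Fˣ) (Additive Fˣ)) :=
  Submodule.span ℤ {x | ∃ u v : Fˣ, (u : F) + (v : F) = 1 ∧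
    x = (Additive.ofMul u) ⊗ₜ[ℤ] (Additive.ofMul v)}

/-- The second Milnor `K`-group of a field `F`. -/
def MilnorK2 (F : Type*) [Field F] :=
  TensorProduct ℤ (Additive Fˣ) (Additive Fˣ) ⧸ steinbergRel F

noncomputable instance (F : Type*) [Field F] : AddCommGroup (MilnorK2 F) :=
  inferInstanceAs (AddCommGroup
    (TensorProduct ℤ (Additive Fˣ) (Additive Fˣ) ⧸ steinbergRel F))

/-- The Milnor symbol `{x, y}` in `K^M_2(F)`. -/
noncomputable def milnorSymbol {F : Type*} [Field F] (x y : Fˣ) : MilnorK2 F :=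
  Submodule.Quotient.mk ((Additive.ofMul x) ⊗ₜ[ℤ] (Additive.ofMul y))

/-! Since `(1 + aT) + (-a)T = 1`, the Steinberg relation gives `{1 + aT, T} = -{1 + aT, -a}`,
and bilinearity turns `{1 + aT, uT^j}` into `{1 + aT, u} + j{1 + aT, T}`. For the membership,
`{1 + bT, T} = -{1 + bT, -b}` is a generator when `b ∈ A^×`; otherwise `b - 1` is a unit of the
local ring `A`, and `1 + bT = (1 + T)(1 + cT)` with the unit `c = (b - 1)/(1 + T)` reduces to
that case twice. -/

section Milnor

variable {K : Type*} [Field K]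

theorem milnorSymbol_mul_right (x y z : Kˣ) :
    milnorSymbol x (y * z) = milnorSymbol x y + milnorSymbol x z := by
  simp only [milnorSymbol, ofMul_mul, tmul_add]
  rfl

theorem milnorSymbol_mul_left (x y z : Kˣ) :
    milnorSymbol (x * y) z = milnorSymbol x z + milnorSymbol y z := by
  simp only [milnorSymbol, ofMul_mul, add_tmul]
  rfl

theorem milnorSymbol_zpow_right (x y : Kˣ) (j : ℤ) :
    milnorSymbol x (y ^ j) = j • milnorSymbol x y := by
  let symbolRight : Additive Kˣ →+ MilnorK2 K :=
    AddMonoidHom.mk' (fun y ↦ milnorSymbol x y.toMul) fun _ _ ↦ milnorSymbol_mul_right x _ _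
  exact map_zsmul symbolRight j (Additive.ofMul y)

theorem milnorSymbol_eq_zero_of_add_eq_one {x y : Kˣ} (h : (x : K) + y = 1) :
    milnorSymbol x y = 0 :=
  (Submodule.Quotient.mk_eq_zero (steinbergRel K)).mpr (Submodule.subset_span ⟨x, y, h, rfl⟩)

theorem milnorSymbol_eq_neg_of_add_mul_eq_one {x y z : Kˣ} (h : (x : K) + y * z = 1) :
    milnorSymbol x y = -milnorSymbol x z := by
  have hxyz : milnorSymbol x (y * z) = 0 := milnorSymbol_eq_zero_of_add_eq_one (by simpa using h)
  rw [milnorSymbol_mul_right] at hxyz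
  exact eq_neg_of_add_eq_zero_left hxyz

end Milnor

theorem IsLocalRing.exists_unit_mul_one_add_mul_eq {A : Type*} [CommRing A] [IsLocalRing A]
    {τ b : A} (hτ : ¬IsUnit τ) (hb : ¬IsUnit b) :
    ∃ c : Aˣ, (1 + τ) * (1 + τ * c) = 1 + τ * b := by
  obtain ⟨e, he⟩ : IsUnit (1 + τ) := by
    simpa using isUnit_one_sub_self_of_mem_nonunits (-τ) (by simpa using hτ)
  obtain ⟨d, hd⟩ : IsUnit (b - 1) := by
    simpa using (isUnit_one_sub_self_of_mem_nonunits b hb).neg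
  refine ⟨d * e⁻¹, ?_⟩
  rw [Units.val_mul, ← he]
  linear_combination τ * d * e.mul_inv + τ * hd + he

section LocalRing

variable {A K : Type*} [CommRing A] [Field K] (φ : A →+* K)

/-- The subgroup `(1 + T·A)·K^M_1(A)` of `K^M_2(K)`. -/
noncomputable def oneAddMulSymbols (T : K) : AddSubgroup (MilnorK2 K) :=
  AddSubgroup.closure {z | ∃ (p q : Kˣ) (b : A) (c : Aˣ),
    (p : K) = 1 + T * φ b ∧ (q : K) = φ c ∧ z = milnorSymbol p q}

theorem milnorSymbol_mem_oneAddMulSymbols_of_unit {T V : Kˣ} (c : Aˣ)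
    (hV : (V : K) = 1 + T * φ c) : milnorSymbol V T ∈ oneAddMulSymbols φ T := by
  rw [milnorSymbol_eq_neg_of_add_mul_eq_one (z := Units.map φ (-c)) (by simp [hV])]
  exact neg_mem (AddSubgroup.subset_closure ⟨V, _, c, -c, hV, by simp, rfl⟩)

theorem milnorSymbol_mem_oneAddMulSymbols [IsLocalRing A] {τ : A} (hτ : ¬IsUnit τ) {T V : Kˣ}
    (hT : (T : K) = φ τ) (b : A) (hV : (V : K) = 1 + T * φ b) :
    milnorSymbol V T ∈ oneAddMulSymbols φ T := by
  by_cases hb : IsUnit b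
  · exact milnorSymbol_mem_oneAddMulSymbols_of_unit φ hb.unit hV
  obtain ⟨c, hc⟩ := IsLocalRing.exists_unit_mul_one_add_mul_eq hτ hb
  have hV' : (V : K) = (1 + T * φ (1 : Aˣ)) * (1 + T * φ c) := by
    have hφc := congrArg φ hc
    simp only [map_mul, map_add, map_one] at hφc
    rw [hV, hT, Units.val_one, map_one, mul_one, hφc]
  have h₁ : 1 + T * φ (1 : Aˣ) ≠ 0 := left_ne_zero_of_mul (hV' ▸ V.ne_zero)
  have h₂ : 1 + T * φ c ≠ 0 := right_ne_zero_of_mul (hV' ▸ V.ne_zero)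
  rw [show V = Units.mk0 _ h₁ * Units.mk0 _ h₂ from Units.ext hV', milnorSymbol_mul_left]
  exact add_mem (milnorSymbol_mem_oneAddMulSymbols_of_unit φ 1 rfl)
    (milnorSymbol_mem_oneAddMulSymbols_of_unit φ c rfl)

end LocalRing

/-- Let `F` be a field and `A = F[T]_{(T)}`.  In `K^M_2(F(T))`, for any
`a ∈ A`, `u ∈ A^×` and `j ∈ ℤ` one has
`{1 + aT, uT^j} = {1 + aT, u} − j·{1 + aT, −a}`; in particular `{1 + aT, uT^j}` lies in
`(1 + T·A)·K^M_1(A)`, the subgroup generated by symbols `{v, w}` with `v ∈ 1 + T·A` and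
`w ∈ A^×`. -/
theorem milnorSymbol_one_add_aT_mul_uTj
    (F : Type*) [Field F]
    [hP : (Ideal.span {(X : Polynomial F)}).IsPrime]
    (hsub : (Ideal.span {(X : Polynomial F)}).primeCompl ≤
      Submonoid.comap (RingHom.id (Polynomial F)) (nonZeroDivisors (Polynomial F))) :
    -- `φ : A → F(T)` is the canonical map from `A = F[T]_{(T)}` to `F(T)`
    ∀ (φ : Localization (Ideal.span {(X : Polynomial F)}).primeCompl →+*
        FractionRing (Polynomial F)),
      φ = IsLocalization.map (FractionRing (Polynomial F)) (RingHom.id (Polynomial F)) hsub →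
    ∀ (a : Localization (Ideal.span {(X : Polynomial F)}).primeCompl)
      (u : (Localization (Ideal.span {(X : Polynomial F)}).primeCompl)ˣ) (j : ℤ)
      (v w w₁ w₂ : (FractionRing (Polynomial F))ˣ),
      (v : FractionRing (Polynomial F)) =
        1 + φ a * algebraMap (Polynomial F) (FractionRing (Polynomial F)) X →
      (w : FractionRing (Polynomial F)) =
        φ u * (algebraMap (Polynomial F) (FractionRing (Polynomial F)) X) ^ j →
      (w₁ : FractionRing (Polynomial F)) = φ u →
      (w₂ : FractionRing (Polynomial F)) = - φ a →
      (milnorSymbol v w = milnorSymbol v w₁ - j • milnorSymbol v w₂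
      ∧ milnorSymbol v w ∈ AddSubgroup.closure
          {z : MilnorK2 (FractionRing (Polynomial F)) |
            ∃ (p q : (FractionRing (Polynomial F))ˣ)
              (b : Localization (Ideal.span {(X : Polynomial F)}).primeCompl)
              (c : (Localization (Ideal.span {(X : Polynomial F)}).primeCompl)ˣ),
              (p : FractionRing (Polynomial F)) =
                1 + algebraMap (Polynomial F) (FractionRing (Polynomial F)) X * φ b ∧
              (q : FractionRing (Polynomial F)) = φ c ∧
              z = milnorSymbol p q}) := by
  intro φ hφ a u j v w w₁ w₂ hv hw hw₁ hw₂
  set τ := algebraMap F[X] (Localization (Ideal.span {(X : F[X])}).primeCompl) X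
  have hτ : ¬IsUnit τ := by
    rw [IsLocalization.AtPrime.isUnit_to_map_iff _ (Ideal.span {(X : F[X])})]
    exact fun h ↦ h (Ideal.mem_span_singleton_self X)
  have hφτ : φ τ = algebraMap F[X] (FractionRing F[X]) X := hφ ▸ IsLocalization.map_eq hsub X
  let t := Units.mk0 _ (IsFractionRing.to_map_ne_zero_of_mem_nonZeroDivisors
    (K := FractionRing F[X]) (mem_nonZeroDivisors_of_ne_zero (X_ne_zero (R := F))))
  have hvt : milnorSymbol v t = -milnorSymbol v w₂ :=
    milnorSymbol_eq_neg_of_add_mul_eq_one (by simp [t, hv, hw₂]; ring)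
  have hsplit : milnorSymbol v w = milnorSymbol v w₁ + j • milnorSymbol v t := by
    rw [← milnorSymbol_zpow_right, ← milnorSymbol_mul_right]
    congr 1
    ext
    simp [t, hw, hw₁]
  have hvt_mem : milnorSymbol v t ∈ oneAddMulSymbols φ t :=
    milnorSymbol_mem_oneAddMulSymbols φ hτ hφτ.symm a (by simp [t, hv]; ring)
  refine ⟨by rw [hsplit, hvt, zsmul_neg, sub_eq_add_neg], ?_⟩
  rw [hsplit]
  exact add_mem (AddSubgroup.subset_closure ⟨v, w₁, a, u, by rw [hv]; ring, hw₁, rfl⟩)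
    (zsmul_mem hvt_mem j)
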